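/- arXiv:2502.21205 — 3 statements merged into one kernel-verified Lean document; each statement's English description precedes it below -/
import Mathlib

section
/- With Ω, Σ̄ and Γₓ as above, if Γₓ(t) ∈ ∂Ω for some t ∈ ℝ (equivalently, the n-th coordinate equals ω at that point), then Γₓ(u) ∈ ∂Ω for all u ∈ ℝ; in particular xₙ = ω(x', 0). -/
open Set

lemma frontier_epigraph {E : Type*} [TopologicalSpace E]
    (ω : E × ℝ → ℝ) (hω : Continuous ω) :
    frontier {p : E × ℝ × ℝ | ω (p.1, p.2.2) < p.2.1} =
      {p : E × ℝ × ℝ | p.2.1 = ω (p.1, p.2.2)} := by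
  have hcont : Continuous fun p : E × ℝ × ℝ => p.2.1 - ω (p.1, p.2.2) := by
    apply Continuous.sub
    · exact continuous_snd.fst
    · exact hω.comp (continuous_fst.prodMk continuous_snd.snd)
  have hopen : IsOpen {p : E × ℝ × ℝ | ω (p.1, p.2.2) < p.2.1} := by
    have heq : {p : E × ℝ × ℝ | ω (p.1, p.2.2) < p.2.1}
        = (fun p : E × ℝ × ℝ => p.2.1 - ω (p.1, p.2.2)) ⁻¹' (Set.Ioi 0) := by
      ext q; simp [sub_pos]
    rw [heq]
    exact isOpen_Ioi.preimage hcont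
  ext p
  constructor
  · intro hp
    have h1 : p ∈ closure {p : E × ℝ × ℝ | ω (p.1, p.2.2) < p.2.1} := hp.1
    have h2 : p ∉ {p : E × ℝ × ℝ | ω (p.1, p.2.2) < p.2.1} := by
      rw [← hopen.interior_eq]; exact hp.2
    have hle : ω (p.1, p.2.2) ≤ p.2.1 := by
      have hcl : closure {p : E × ℝ × ℝ | ω (p.1, p.2.2) < p.2.1}
          ⊆ {p : E × ℝ × ℝ | ω (p.1, p.2.2) ≤ p.2.1} := by
        apply closure_minimal
        · intro q hq
          exact le_of_lt (show ω (q.1, q.2.2) < q.2.1 from hq)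
        · have heq : {p : E × ℝ × ℝ | ω (p.1, p.2.2) ≤ p.2.1}
              = (fun p : E × ℝ × ℝ => p.2.1 - ω (p.1, p.2.2)) ⁻¹' (Set.Ici 0) := by
            ext q; simp [sub_nonneg]
          rw [heq]; exact isClosed_Ici.preimage hcont
      exact hcl h1
    have hnlt : ¬ ω (p.1, p.2.2) < p.2.1 := h2
    show p.2.1 = ω (p.1, p.2.2)
    exact le_antisymm (not_lt.1 hnlt) hle
  · intro hp
    rw [Set.mem_setOf_eq] at hp
    constructor
    · -- in closure: approximate from above
      have hc : Continuous fun ε : ℝ => ((p.1, p.2.1 + ε, p.2.2) : E × ℝ × ℝ) := by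
        continuity
      refine mem_closure_of_tendsto (f := fun ε : ℝ => ((p.1, p.2.1 + ε, p.2.2) : E × ℝ × ℝ))
        (b := nhdsWithin (0:ℝ) (Set.Ioi 0)) ?_ ?_
      · have := hc.tendsto 0
        simpa using this.mono_left nhdsWithin_le_nhds
      · filter_upwards [self_mem_nhdsWithin] with ε hε
        have hε' : (0:ℝ) < ε := hε
        show ω (p.1, p.2.2) < p.2.1 + ε
        linarith
    · rw [hopen.interior_eq]
      intro h
      exact absurd hp (ne_of_gt h)

/-- If `Γₓ(t)` touches the boundary of the epigraph `Ω` for one `t`, then the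
whole curve `Γₓ` lies in `∂Ω`; in particular `xₙ = ω(x',0)`. -/
theorem stmt_2 {n : ℕ} (hn : 2 ≤ n)
    (ω : EuclideanSpace ℝ (Fin (n - 1)) × ℝ → ℝ) (K : NNReal) (hω : LipschitzWith K ω)
    (Ω : Set (EuclideanSpace ℝ (Fin (n - 1)) × ℝ × ℝ))
    (hΩ : Ω = {p | ω (p.1, p.2.2) < p.2.1})
    (Γ : (EuclideanSpace ℝ (Fin (n - 1)) × ℝ) → ℝ → EuclideanSpace ℝ (Fin (n - 1)) × ℝ × ℝ)
    (hΓ : ∀ z t, Γ z t = (z.1, z.2 + ω (z.1, t) - ω (z.1, 0), t))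
    (x : EuclideanSpace ℝ (Fin (n - 1)) × ℝ) (hx : ω (x.1, 0) ≤ x.2)
    (t : ℝ) (ht : Γ x t ∈ frontier Ω) :
    (∀ u : ℝ, Γ x u ∈ frontier Ω) ∧ x.2 = ω (x.1, 0) := by
  rw [hΩ, frontier_epigraph ω hω.continuous] at ht
  rw [hΓ] at ht
  simp only [Set.mem_setOf_eq] at ht
  have hx2 : x.2 = ω (x.1, 0) := by linarith
  refine ⟨fun u => ?_, hx2⟩
  rw [hΩ, frontier_epigraph ω hω.continuous, hΓ]
  simp only [Set.mem_setOf_eq]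
  linarith
end

section
/- Let n ≥ 2, λ > 0, and Σ = {x ∈ ℝⁿ : xₙ > λ|x'|} where x = (x', xₙ). Then for every g ∈ H¹(ℝⁿ₊) on the half-space ℝⁿ₊ = {xₙ > 0}, assuming the half-space Kato inequality ∫_{ℝⁿ₊} |∇g|² dx ≥ Kₙ ∫_{ℝ^{n−1}} g(x',0)²/|x'| dx' with Kₙ = 2Γ(n/4)²/Γ((n−2)/4)², one has for every f ∈ H¹(Σ): ∫_Σ |∇f(x)|² dx ≥ (Kₙ/(1+λ)²) ∫_{ℝ^{n−1}} f(x', λ|x'|)²/|x'| dx'. -/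
open Set MeasureTheory

private lemma integrable_sq_norm_fderiv' {E' : Type*} [NormedAddCommGroup E'] [NormedSpace ℝ E']
    [MeasurableSpace E'] [OpensMeasurableSpace E'] {μ : Measure E'} [IsFiniteMeasureOnCompacts μ]
    {h : E' → ℝ} {C : NNReal} (hl : LipschitzWith C h) (hc : HasCompactSupport h) :
    Integrable (fun x => ‖fderiv ℝ h x‖ ^ 2) μ := by
  have hsupp : Function.support (fun x => ‖fderiv ℝ h x‖ ^ 2) ⊆ tsupport h := by
    intro x hx
    have hne : fderiv ℝ h x ≠ 0 := by
      intro h0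
      apply hx
      simp [h0]
    exact support_fderiv_subset (𝕜 := ℝ) hne
  rw [← integrableOn_iff_integrable_of_support_subset hsupp]
  refine Measure.integrableOn_of_bounded hc.measure_lt_top.ne
    ((measurable_fderiv ℝ h).norm.pow_const 2).aestronglyMeasurable (M := (C : ℝ) ^ 2) ?_
  refine Filter.Eventually.of_forall fun x => ?_
  rw [Real.norm_eq_abs, abs_of_nonneg (by positivity)]
  exact pow_le_pow_left₀ (norm_nonneg _) (norm_fderiv_le_of_lipschitz ℝ hl) 2

private lemma stmt5_aux {E : Type*} [NormedAddCommGroup E] [InnerProductSpace ℝ E]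
    [Nontrivial E] [FiniteDimensional ℝ E] [MeasureSpace E] [BorelSpace E]
    [SecondCountableTopology E] [(volume : Measure E).IsAddHaarMeasure]
    [SigmaFinite (volume : Measure E)] (lam : ℝ) (hlam : 0 < lam) (Kn : ℝ)
    (hKato : ∀ (g : E × ℝ → ℝ) (L : NNReal),
      LipschitzWith L g → HasCompactSupport g →
        Kn * ∫ x' : E, g (x', 0) ^ 2 / ‖x'‖ ≤
          ∫ x in {p : E × ℝ | 0 < p.2}, ‖fderiv ℝ g x‖ ^ 2)
    (f : E × ℝ → ℝ) (L : NNReal)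
    (hf : LipschitzWith L f) (hfc : HasCompactSupport f) :
    Kn / (1 + lam) ^ 2 * ∫ x' : E, f (x', lam * ‖x'‖) ^ 2 / ‖x'‖ ≤
      ∫ x in {p : E × ℝ | lam * ‖p.1‖ < p.2},
        ‖fderiv ℝ f x‖ ^ 2 := by
  -- the shear map and its inverse
  set φ : E × ℝ → E × ℝ := fun p => (p.1, p.2 + lam * ‖p.1‖) with hφdef
  set ψ : E × ℝ → E × ℝ := fun p => (p.1, p.2 - lam * ‖p.1‖) with hψdef
  have hψφ : ∀ p, ψ (φ p) = p := fun p => by simp [hφdef, hψdef]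
  have hφψ : ∀ p, φ (ψ p) = p := fun p => by simp [hφdef, hψdef]
  let Φ : (E × ℝ) ≃ₜ (E × ℝ) :=
    { toFun := φ
      invFun := ψ
      left_inv := hψφ
      right_inv := hφψ
      continuous_toFun := continuous_fst.prodMk
        (continuous_snd.add (continuous_const.mul continuous_fst.norm))
      continuous_invFun := continuous_fst.prodMk
        (continuous_snd.sub (continuous_const.mul continuous_fst.norm)) }
  have hΦcoe : ⇑Φ = φ := rfl
  have hΨcoe : ⇑Φ.symm = ψ := rfl
  -- φ is measure preserving
  have hmp : MeasurePreserving φ (volume : Measure (E × ℝ)) volume := by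
    rw [Measure.volume_eq_prod]
    exact (MeasurePreserving.id (volume : Measure E)).skew_product
      (g := fun (x' : E) (t : ℝ) => t + lam * ‖x'‖)
      (measurable_snd.add ((measurable_fst.norm).const_mul lam))
      (Filter.Eventually.of_forall fun x' =>
        (measurePreserving_add_right (volume : Measure ℝ) (lam * ‖x'‖)).map_eq)
  have hemb : MeasurableEmbedding φ := by
    rw [← hΦcoe]
    exact Φ.toMeasurableEquiv.measurableEmbedding
  -- preimage of the cone is the half-space
  have hpre : φ ⁻¹' {p : E × ℝ | lam * ‖p.1‖ < p.2} = {p : E × ℝ | 0 < p.2} := by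
    ext p
    simp only [hφdef, Set.mem_preimage, Set.mem_setOf_eq]
    constructor <;> intro h <;> linarith
  -- φ is Lipschitz
  have hφ2 : LipschitzWith lam.toNNReal (fun p : E × ℝ => lam * ‖p.1‖) := by
    refine LipschitzWith.of_dist_le_mul fun a b => ?_
    rw [Real.dist_eq, Real.coe_toNNReal _ hlam.le]
    have h3 : |‖a.1‖ - ‖b.1‖| ≤ dist a b := by
      calc |‖a.1‖ - ‖b.1‖| ≤ ‖a.1 - b.1‖ := abs_norm_sub_norm_le _ _
        _ = dist a.1 b.1 := (dist_eq_norm _ _).symm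
        _ ≤ dist a b := by rw [Prod.dist_eq]; exact le_max_left _ _
    calc |lam * ‖a.1‖ - lam * ‖b.1‖| = lam * |‖a.1‖ - ‖b.1‖| := by
          rw [← mul_sub, abs_mul, abs_of_nonneg hlam.le]
      _ ≤ lam * dist a b := by
          have := mul_le_mul_of_nonneg_left h3 hlam.le
          linarith
  have hφlip : LipschitzWith (1 + lam.toNNReal) φ := by
    have hadd : LipschitzWith (1 + lam.toNNReal) (fun p : E × ℝ => p.2 + lam * ‖p.1‖) :=
      LipschitzWith.prod_snd.add hφ2
    have := LipschitzWith.prodMk (LipschitzWith.prod_fst (α := E) (β := ℝ)) hadd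
    have hmax : max 1 (1 + lam.toNNReal) = 1 + lam.toNNReal :=
      max_eq_right (le_add_of_nonneg_right zero_le)
    rw [hmax] at this
    exact this
  have hcoe : ((1 + lam.toNNReal : NNReal) : ℝ) = 1 + lam := by
    rw [NNReal.coe_add, NNReal.coe_one, Real.coe_toNNReal _ hlam.le]
  -- the composition g = f ∘ φ
  have hg_lip : LipschitzWith (L * (1 + lam.toNNReal)) (f ∘ φ) := hf.comp hφlip
  have hg_c : HasCompactSupport (f ∘ φ) := by
    rw [← hΦcoe]
    exact hfc.comp_homeomorph Φ
  -- apply the half-space Kato inequality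
  have hK := hKato (f ∘ φ) (L * (1 + lam.toNNReal)) hg_lip hg_c
  -- rewrite the boundary integral
  have hLHS : (∫ x' : E, (f ∘ φ) (x', 0) ^ 2 / ‖x'‖) =
      ∫ x' : E, f (x', lam * ‖x'‖) ^ 2 / ‖x'‖ := by
    congr 1
    funext x'
    simp [hφdef, Function.comp]
  rw [hLHS] at hK
  -- null set where the shear is not differentiable
  have hnull : volume {p : E × ℝ | p.1 = 0} = 0 := by
    have hset : {p : E × ℝ | p.1 = 0} = ({0} : Set E) ×ˢ (univ : Set ℝ) := by
      ext p
      simp only [Set.mem_setOf_eq, Set.mem_prod, Set.mem_singleton_iff, Set.mem_univ, and_true]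
    rw [hset, Measure.volume_eq_prod, Measure.prod_prod, measure_singleton, zero_mul]
  -- pointwise bound away from the null set
  have key : ∀ p : E × ℝ, p.1 ≠ 0 →
      ‖fderiv ℝ (f ∘ φ) p‖ ^ 2 ≤ (1 + lam) ^ 2 * ‖fderiv ℝ f (φ p)‖ ^ 2 := by
    intro p hp
    have hnrm : DifferentiableAt ℝ (fun q : E × ℝ => ‖q.1‖) p :=
      DifferentiableAt.norm ℝ differentiableAt_fst hp
    have hφd : DifferentiableAt ℝ φ p :=
      differentiableAt_fst.prodMk (differentiableAt_snd.add (hnrm.const_mul lam))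
    by_cases hfd : DifferentiableAt ℝ f (φ p)
    · have hcomp : fderiv ℝ (f ∘ φ) p = (fderiv ℝ f (φ p)).comp (fderiv ℝ φ p) :=
        fderiv_comp p hfd hφd
      have h1 : ‖fderiv ℝ (f ∘ φ) p‖ ≤ ‖fderiv ℝ f (φ p)‖ * (1 + lam) := by
        rw [hcomp]
        refine (ContinuousLinearMap.opNorm_comp_le _ _).trans ?_
        have h2 : ‖fderiv ℝ φ p‖ ≤ 1 + lam := by
          have := norm_fderiv_le_of_lipschitz ℝ hφlip (x₀ := p)
          rwa [hcoe] at this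
        exact mul_le_mul_of_nonneg_left h2 (norm_nonneg _)
      calc ‖fderiv ℝ (f ∘ φ) p‖ ^ 2 ≤ (‖fderiv ℝ f (φ p)‖ * (1 + lam)) ^ 2 :=
            pow_le_pow_left₀ (norm_nonneg (fderiv ℝ (f ∘ φ) p)) h1 2
        _ = (1 + lam) ^ 2 * ‖fderiv ℝ f (φ p)‖ ^ 2 := by ring
    · have hnd : ¬ DifferentiableAt ℝ (f ∘ φ) p := by
        intro hgd
        apply hfd
        have hψd : DifferentiableAt ℝ ψ (φ p) := by
          have hp' : (φ p).1 ≠ 0 := hp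
          have hnrm' : DifferentiableAt ℝ (fun q : E × ℝ => ‖q.1‖) (φ p) :=
            DifferentiableAt.norm ℝ differentiableAt_fst hp'
          exact differentiableAt_fst.prodMk (differentiableAt_snd.sub (hnrm'.const_mul lam))
        have hgd' : DifferentiableAt ℝ (f ∘ φ) (ψ (φ p)) := by
          rw [hψφ p]; exact hgd
        have hcomp2 : DifferentiableAt ℝ ((f ∘ φ) ∘ ψ) (φ p) :=
          DifferentiableAt.comp (φ p) hgd' hψd
        have hfeq : (f ∘ φ) ∘ ψ = f := by
          funext q
          simp [Function.comp, hφψ q]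
        rwa [hfeq] at hcomp2
      rw [fderiv_zero_of_not_differentiableAt hnd]
      have hpos : (0:ℝ) ≤ (1 + lam) ^ 2 * ‖fderiv ℝ f (φ p)‖ ^ 2 := by positivity
      simpa [ContinuousLinearMap.opNorm_zero] using hpos
  have hae : ∀ᵐ p : E × ℝ,
      ‖fderiv ℝ (f ∘ φ) p‖ ^ 2 ≤ (1 + lam) ^ 2 * ‖fderiv ℝ f (φ p)‖ ^ 2 := by
    rw [ae_iff]
    refine measure_mono_null (fun p hp => ?_) hnull
    simp only [Set.mem_setOf_eq, not_le] at hp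
    by_contra h
    exact absurd (key p h) (not_le.mpr hp)
  -- integrability
  have hu : Integrable (fun x => ‖fderiv ℝ (f ∘ φ) x‖ ^ 2) (volume : Measure (E × ℝ)) :=
    integrable_sq_norm_fderiv' hg_lip hg_c
  have hu' : Integrable (fun x => ‖fderiv ℝ f x‖ ^ 2) (volume : Measure (E × ℝ)) :=
    integrable_sq_norm_fderiv' hf hfc
  have hvint : IntegrableOn (fun x => (1 + lam) ^ 2 * ‖fderiv ℝ f (φ x)‖ ^ 2)
      {p : E × ℝ | 0 < p.2} volume := by
    rw [← hpre]
    have : IntegrableOn ((fun x => ‖fderiv ℝ f x‖ ^ 2) ∘ φ)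
        (φ ⁻¹' {p : E × ℝ | lam * ‖p.1‖ < p.2}) volume :=
      (hmp.integrableOn_comp_preimage hemb).mpr hu'.integrableOn
    exact this.const_mul _
  -- comparison of the gradient integrals
  have hmono : ∫ x in {p : E × ℝ | 0 < p.2}, ‖fderiv ℝ (f ∘ φ) x‖ ^ 2 ≤
      ∫ x in {p : E × ℝ | 0 < p.2}, (1 + lam) ^ 2 * ‖fderiv ℝ f (φ x)‖ ^ 2 :=
    setIntegral_mono_ae hu.integrableOn hvint hae
  have heq : ∫ x in {p : E × ℝ | 0 < p.2}, (1 + lam) ^ 2 * ‖fderiv ℝ f (φ x)‖ ^ 2 =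
      (1 + lam) ^ 2 * ∫ x in {p : E × ℝ | lam * ‖p.1‖ < p.2}, ‖fderiv ℝ f x‖ ^ 2 := by
    rw [integral_const_mul]
    congr 1
    rw [← hpre]
    exact hmp.setIntegral_preimage_emb hemb (fun x => ‖fderiv ℝ f x‖ ^ 2) _
  have hchain : Kn * (∫ x' : E, f (x', lam * ‖x'‖) ^ 2 / ‖x'‖) ≤
      (1 + lam) ^ 2 * ∫ x in {p : E × ℝ | lam * ‖p.1‖ < p.2}, ‖fderiv ℝ f x‖ ^ 2 :=
    hK.trans (hmono.trans_eq heq)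
  have hc2 : (0:ℝ) < (1 + lam) ^ 2 := by positivity
  rw [div_mul_eq_mul_div, div_le_iff₀ hc2]
  linarith [hchain]

/-- transfer of the half-space Kato inequality to the cone
`Σ = {xₙ > λ|x'|}`: assuming the Kato inequality on the half-space with the sharp
constant `Kₙ = 2Γ(n/4)²/Γ((n-2)/4)²`, one gets it on the cone with constant
`Kₙ/(1+λ)²`. -/
theorem stmt_5 {n : ℕ} (hn : 2 ≤ n) (lam : ℝ) (hlam : 0 < lam)
    (Kn : ℝ) (hKn : Kn = 2 * Real.Gamma ((n : ℝ) / 4) ^ 2 / Real.Gamma (((n : ℝ) - 2) / 4) ^ 2)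
    (hKato : ∀ (g : EuclideanSpace ℝ (Fin (n - 1)) × ℝ → ℝ) (L : NNReal),
      LipschitzWith L g → HasCompactSupport g →
        Kn * ∫ x' : EuclideanSpace ℝ (Fin (n - 1)), g (x', 0) ^ 2 / ‖x'‖ ≤
          ∫ x in {p : EuclideanSpace ℝ (Fin (n - 1)) × ℝ | 0 < p.2}, ‖fderiv ℝ g x‖ ^ 2)
    (f : EuclideanSpace ℝ (Fin (n - 1)) × ℝ → ℝ) (L : NNReal)
    (hf : LipschitzWith L f) (hfc : HasCompactSupport f) :
    Kn / (1 + lam) ^ 2 * ∫ x' : EuclideanSpace ℝ (Fin (n - 1)), f (x', lam * ‖x'‖) ^ 2 / ‖x'‖ ≤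
      ∫ x in {p : EuclideanSpace ℝ (Fin (n - 1)) × ℝ | lam * ‖p.1‖ < p.2},
        ‖fderiv ℝ f x‖ ^ 2 := by
  haveI : Nonempty (Fin (n - 1)) := ⟨⟨0, by omega⟩⟩
  haveI : Nontrivial (EuclideanSpace ℝ (Fin (n - 1))) := by
    refine ⟨0, WithLp.toLp 2 (fun _ => (1:ℝ)), fun h => ?_⟩
    have := congrArg (fun v : EuclideanSpace ℝ (Fin (n - 1)) => v (Classical.arbitrary _)) h
    simp at this
  exact stmt5_aux lam hlam Kn hKato f L hf hfc
end

section
/- Let λ > 0, Σ = {x ∈ ℝⁿ : xₙ > λ|x'|}, and let f : closure(Σ) → ℝ be Lipschitz with compact support. For each s > 0, ∫_Σ λ f(x) ∂ₙf(x) / √(|x'|² + s f(x)²) dx = −λ ∫_{ℝ^{n−1}} g(x') / (|x'| + √(|x'|² + s g(x'))) dx', where g(x') = f(x', λ|x'|)². -/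
open Set MeasureTheory
open Filter Topology

/-- FTC for Lipschitz functions with a.e. derivative. -/
theorem lipschitz_integral_deriv {K : NNReal} {h : ℝ → ℝ} (hh : LipschitzWith K h)
    {a b : ℝ} (hab : a ≤ b) : ∫ t in a..b, deriv h t = h b - h a := by
  set u : ℕ → ℝ := fun n => ((n : ℝ) + 1)⁻¹ with hu
  have hupos : ∀ n, 0 < u n := fun n => by positivity
  have hu0 : Tendsto u atTop (𝓝 0) := tendsto_one_div_add_atTop_nhds_zero_nat.congr (by
    intro n; simp [hu, one_div])
  set G : ℕ → ℝ → ℝ := fun n t => (h (t + u n) - h t) / u n with hG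
  have hcont : Continuous h := hh.continuous
  -- a.e. convergence of difference quotients
  have hae : ∀ᵐ t : ℝ, Tendsto (fun n => G n t) atTop (𝓝 (deriv h t)) := by
    filter_upwards [hh.ae_differentiableAt] with t ht
    have hd : HasDerivAt h (deriv h t) t := ht.hasDerivAt
    rw [hasDerivAt_iff_tendsto_slope] at hd
    have h1 : Tendsto (fun n => t + u n) atTop (𝓝[≠] t) := by
      refine tendsto_nhdsWithin_of_tendsto_nhds_of_eventually_within _ ?_ ?_
      · simpa using (tendsto_const_nhds (x := t)).add hu0
      · filter_upwards with n
        simp only [mem_compl_iff, mem_singleton_iff]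
        intro hcon
        nlinarith [hupos n, hcon]
    have := hd.comp h1
    refine this.congr fun n => ?_
    simp [slope, G, div_eq_inv_mul]
  -- dominated convergence
  have hGmeas : ∀ n, AEStronglyMeasurable (G n) (volume.restrict (Ioc a b)) := by
    intro n
    exact (((hcont.comp (continuous_id.add continuous_const)).sub hcont).div_const _).aestronglyMeasurable
  have hGbd : ∀ n, ∀ᵐ t ∂(volume.restrict (Ioc a b)), ‖G n t‖ ≤ (K : ℝ) := by
    intro n
    filter_upwards with t
    have := hh.dist_le_mul (t + u n) t
    simp only [Real.dist_eq, add_sub_cancel_left] at this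
    rw [hG]
    simp only [norm_div, Real.norm_eq_abs, abs_of_pos (hupos n)]
    rw [div_le_iff₀ (hupos n)]
    simpa [abs_of_pos (hupos n)] using this
  have hbdint : Integrable (fun _ : ℝ => (K : ℝ)) (volume.restrict (Ioc a b)) :=
    integrable_const _
  have hDC := MeasureTheory.tendsto_integral_of_dominated_convergence
    (μ := volume.restrict (Ioc a b)) (F := G) (f := deriv h) (bound := fun _ => (K : ℝ))
    hGmeas hbdint hGbd (ae_restrict_of_ae hae)
  -- compute ∫ G n
  have hint : ∀ c d : ℝ, IntervalIntegrable h volume c d := fun c d =>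
    hcont.intervalIntegrable c d
  have hcomp : ∀ n, ∫ t in Ioc a b, G n t = (u n)⁻¹ * ((∫ t in b..(b + u n), h t) - ∫ t in a..(a + u n), h t) := by
    intro n
    have h1 : ∫ t in Ioc a b, G n t = ∫ t in a..b, G n t := (intervalIntegral.integral_of_le hab).symm
    rw [h1, hG]
    simp only [div_eq_inv_mul]
    rw [intervalIntegral.integral_const_mul]
    congr 1
    rw [intervalIntegral.integral_sub ((Continuous.intervalIntegrable (by fun_prop) _ _ : IntervalIntegrable (fun t => h (t + u n)) volume a b)) (hint a b)]
    have h2 : ∫ t in a..b, h (t + u n) = ∫ t in (a + u n)..(b + u n), h t :=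
      intervalIntegral.integral_comp_add_right h (u n)
    rw [h2]
    have h3 : (∫ t in (a + u n)..(b + u n), h t) = (∫ t in (a+u n)..b, h t) + ∫ t in b..(b + u n), h t :=
      (intervalIntegral.integral_add_adjacent_intervals (hint _ _) (hint _ _)).symm
    have h4 : (∫ t in a..b, h t) = (∫ t in a..(a+u n), h t) + ∫ t in (a+u n)..b, h t :=
      (intervalIntegral.integral_add_adjacent_intervals (hint _ _) (hint _ _)).symm
    rw [h3, h4]; ring
  -- limits of endpoint averages
  have hend : ∀ c : ℝ, Tendsto (fun n => (u n)⁻¹ * ∫ t in c..(c + u n), h t) atTop (𝓝 (h c)) := by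
    intro c
    have hF : HasDerivAt (fun x => ∫ t in c..x, h t) (h c) c :=
      intervalIntegral.integral_hasDerivAt_right (hint c c)
        hcont.stronglyMeasurable.stronglyMeasurableAtFilter hcont.continuousAt
    rw [hasDerivAt_iff_tendsto_slope] at hF
    have h1 : Tendsto (fun n => c + u n) atTop (𝓝[≠] c) := by
      refine tendsto_nhdsWithin_of_tendsto_nhds_of_eventually_within _ ?_ ?_
      · simpa using (tendsto_const_nhds (x := c)).add hu0
      · filter_upwards with n
        simp only [mem_compl_iff, mem_singleton_iff]
        intro hcon; nlinarith [hupos n, hcon]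
    have := hF.comp h1
    refine this.congr fun n => ?_
    simp [slope, div_eq_inv_mul]
  have hlim2 : Tendsto (fun n => ∫ t in Ioc a b, G n t) atTop (𝓝 (h b - h a)) := by
    simp only [hcomp, mul_sub]
    exact (hend b).sub (hend a)
  have := tendsto_nhds_unique hDC hlim2
  rw [intervalIntegral.integral_of_le hab]
  exact this

theorem sqrt_aux_hasDerivAt {a s : ℝ} (ha : 0 < a) (hs : 0 < s) (u : ℝ) :
    HasDerivAt (fun u : ℝ => Real.sqrt (a + s * u ^ 2))
      (s * u / Real.sqrt (a + s * u ^ 2)) u := by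
  have hpos : 0 < a + s * u ^ 2 := by positivity
  have hinner : HasDerivAt (fun u : ℝ => a + s * u ^ 2) (s * (2 * u)) u := by
    simpa using ((hasDerivAt_pow 2 u).const_mul s).const_add a
  have hsqrt := (Real.hasDerivAt_sqrt hpos.ne').comp u hinner
  refine hsqrt.congr_deriv ?_
  have : Real.sqrt (a + s * u ^ 2) ≠ 0 := by positivity
  field_simp
theorem sqrt_aux_lipschitz {a s : ℝ} (ha : 0 < a) (hs : 0 < s) :
    LipschitzWith (Real.sqrt s).toNNReal (fun u : ℝ => Real.sqrt (a + s * u ^ 2)) := by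
  have hdiff : Differentiable ℝ (fun u : ℝ => Real.sqrt (a + s * u ^ 2)) :=
    fun u => (sqrt_aux_hasDerivAt ha hs u).differentiableAt
  apply lipschitzWith_of_nnnorm_deriv_le hdiff
  intro x
  have hd : deriv (fun u : ℝ => Real.sqrt (a + s * u ^ 2)) x
      = s * x / Real.sqrt (a + s * x ^ 2) := (sqrt_aux_hasDerivAt ha hs x).deriv
  rw [← NNReal.coe_le_coe, coe_nnnorm, hd, Real.coe_toNNReal _ (Real.sqrt_nonneg s)]
  have hpos : 0 < a + s * x ^ 2 := by positivity
  rw [Real.norm_eq_abs, abs_div, abs_of_pos (Real.sqrt_pos.2 hpos), div_le_iff₀ (Real.sqrt_pos.2 hpos)]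
  have h1 : Real.sqrt s * Real.sqrt (a + s * x ^ 2) = Real.sqrt (s * (a + s * x ^ 2)) :=
    (Real.sqrt_mul hs.le _).symm
  rw [h1]
  have h2 : |s * x| = Real.sqrt ((s * x) ^ 2) := (Real.sqrt_sq_eq_abs _).symm
  rw [h2]
  apply Real.sqrt_le_sqrt
  nlinarith [sq_nonneg x]

theorem slice_ftc {lam s aN : ℝ} (hlam : 0 < lam) (hs : 0 < s) (haN : 0 < aN)
    {w : ℝ → ℝ} {K : NNReal} (hw : LipschitzWith K w)
    {d : ℝ → ℝ} (hd : ∀ᵐ t : ℝ, HasDerivAt w (d t) t)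
    {b T : ℝ} (hbT : b ≤ T)
    (hint : IntegrableOn (fun t => lam * w t * d t / Real.sqrt (aN ^ 2 + s * w t ^ 2)) (Ioi b))
    (hvanish : ∀ t, T ≤ t → w t = 0) :
    ∫ t in Ioi b, lam * w t * d t / Real.sqrt (aN ^ 2 + s * w t ^ 2)
      = (lam / s) * (aN - Real.sqrt (aN ^ 2 + s * w b ^ 2)) := by
  have ha2 : (0:ℝ) < aN ^ 2 := by positivity
  set φ : ℝ → ℝ := fun t => lam * w t * d t / Real.sqrt (aN ^ 2 + s * w t ^ 2) with hφ
  set H : ℝ → ℝ := fun t => (lam / s) * Real.sqrt (aN ^ 2 + s * w t ^ 2) with hH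
  have hHlip : LipschitzWith (‖lam / s‖₊ * ((Real.sqrt s).toNNReal * K)) H := by
    have base := (sqrt_aux_lipschitz ha2 hs).comp hw
    exact (lipschitzWith_smul (lam / s)).comp base
  have hH_deriv : ∀ᵐ t : ℝ, HasDerivAt H (φ t) t := by
    filter_upwards [hd] with t ht
    have h1 := (sqrt_aux_hasDerivAt ha2 hs (w t)).comp t ht
    have h2 := h1.const_mul (lam / s)
    refine h2.congr_deriv ?_
    have hpos : (0:ℝ) < aN ^ 2 + s * w t ^ 2 := by positivity
    have hsq : Real.sqrt (aN ^ 2 + s * w t ^ 2) ≠ 0 := by positivity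
    simp only [hφ, Function.comp]
    field_simp
  have hzero : ∀ t, T < t → φ t = 0 := by
    intro t ht
    simp [hφ, hvanish t ht.le]
  have hsplit : Ioi b = Ioc b T ∪ Ioi T := (Ioc_union_Ioi_eq_Ioi hbT).symm
  have hint1 : IntegrableOn φ (Ioc b T) := hint.mono_set Ioc_subset_Ioi_self
  have hint2 : IntegrableOn φ (Ioi T) := by
    have heq : EqOn φ (fun _ => (0:ℝ)) (Ioi T) := fun t ht => hzero t ht
    exact (integrableOn_congr_fun heq measurableSet_Ioi).2 (integrableOn_zero)
  rw [hsplit, setIntegral_union (Ioc_disjoint_Ioi le_rfl) measurableSet_Ioi hint1 hint2]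
  have hz2 : ∫ t in Ioi T, φ t = 0 := by
    rw [setIntegral_congr_fun measurableSet_Ioi (fun t ht => hzero t ht)]
    simp
  rw [hz2, add_zero]
  have hcongr : ∫ t in Ioc b T, φ t = ∫ t in Ioc b T, deriv H t := by
    apply setIntegral_congr_ae measurableSet_Ioc
    filter_upwards [hH_deriv] with t ht _
    exact (ht.deriv).symm
  rw [hcongr, ← intervalIntegral.integral_of_le hbT, lipschitz_integral_deriv hHlip hbT]
  have hwT : w T = 0 := hvanish T le_rfl
  simp only [hH, hwT]
  rw [show s * (0:ℝ) ^ 2 = 0 by ring, add_zero, Real.sqrt_sq haN.le]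
  ring

/-- integration by parts identity on the cone `Σ = {xₙ > λ|x'|}`:
`∫_Σ λ f ∂ₙf / √(|x'|² + s f²) dx = -λ ∫ g(x')/(|x'| + √(|x'|² + s g(x'))) dx'`
with `g(x') = f(x', λ|x'|)²`, for compactly supported Lipschitz `f`. -/
theorem stmt_10 {n : ℕ} (hn : 2 ≤ n) (lam : ℝ) (hlam : 0 < lam)
    (f : EuclideanSpace ℝ (Fin (n - 1)) × ℝ → ℝ) (L : NNReal)
    (hf : LipschitzWith L f) (hfc : HasCompactSupport f)
    (g : EuclideanSpace ℝ (Fin (n - 1)) → ℝ) (hg : ∀ x', g x' = f (x', lam * ‖x'‖) ^ 2)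
    (s : ℝ) (hs : 0 < s) :
    (∫ x in {p : EuclideanSpace ℝ (Fin (n - 1)) × ℝ | lam * ‖p.1‖ < p.2},
        lam * f x * fderiv ℝ f x (0, 1) / Real.sqrt (‖x.1‖ ^ 2 + s * f x ^ 2)) =
      -lam * ∫ x' : EuclideanSpace ℝ (Fin (n - 1)),
        g x' / (‖x'‖ + Real.sqrt (‖x'‖ ^ 2 + s * g x')) := by
  classical
  set S : Set (EuclideanSpace ℝ (Fin (n - 1)) × ℝ) := {p | lam * ‖p.1‖ < p.2} with hS
  set Φ : EuclideanSpace ℝ (Fin (n - 1)) × ℝ → ℝ :=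
    fun x => lam * f x * fderiv ℝ f x (0, 1) / Real.sqrt (‖x.1‖ ^ 2 + s * f x ^ 2) with hΦ
  obtain ⟨C, hC⟩ := hfc.isBounded.subset_closedBall 0
  have hfzero : ∀ p, C < ‖p‖ → f p = 0 := by
    intro p hp
    apply image_eq_zero_of_notMem_tsupport
    intro hmem
    have := hC hmem
    rw [Metric.mem_closedBall, dist_zero_right] at this
    linarith
  have hfm : Continuous f := hf.continuous
  have hΦmeas : AEStronglyMeasurable Φ volume := by
    apply Measurable.aestronglyMeasurable
    apply Measurable.div
    · exact (measurable_const.mul hfm.measurable).mul (measurable_fderiv_apply_const ℝ _ _)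
    · have hcont : Continuous fun x : EuclideanSpace ℝ (Fin (n - 1)) × ℝ =>
        Real.sqrt (‖x.1‖ ^ 2 + s * f x ^ 2) := by fun_prop
      exact hcont.measurable
  have hfd_bound : ∀ p, |fderiv ℝ f p (0, 1)| ≤ (L : ℝ) := by
    intro p
    calc |fderiv ℝ f p (0, 1)|
        ≤ ‖fderiv ℝ f p‖ * ‖((0 : EuclideanSpace ℝ (Fin (n - 1))), (1 : ℝ))‖ :=
          (fderiv ℝ f p).le_opNorm _
      _ ≤ (L : ℝ) * 1 := by
          apply mul_le_mul (norm_fderiv_le_of_lipschitz ℝ hf) ?_ (norm_nonneg _) L.coe_nonneg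
          rw [Prod.norm_def]
          simp
      _ = (L : ℝ) := mul_one _
  have hratio : ∀ p : EuclideanSpace ℝ (Fin (n - 1)) × ℝ,
      |f p| / Real.sqrt (‖p.1‖ ^ 2 + s * f p ^ 2) ≤ 1 / Real.sqrt s := by
    intro p
    rcases eq_or_ne (f p) 0 with h0 | h0
    · rw [h0]
      norm_num
    · have h1 : Real.sqrt s * |f p| ≤ Real.sqrt (‖p.1‖ ^ 2 + s * f p ^ 2) := by
        rw [← Real.sqrt_sq_eq_abs, ← Real.sqrt_mul hs.le]
        apply Real.sqrt_le_sqrt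
        nlinarith [sq_nonneg ‖p.1‖]
      rw [div_le_div_iff₀ (by positivity) (Real.sqrt_pos.2 hs)]
      nlinarith [abs_pos.2 h0, Real.sqrt_pos.2 hs]
  set B : ℝ := lam * L / Real.sqrt s with hB
  have hΦ_le : ∀ p, ‖Φ p‖ ≤ (tsupport f).indicator (fun _ => B) p := by
    intro p
    by_cases hp : p ∈ tsupport f
    · rw [indicator_of_mem hp]
      have hsqnn : (0:ℝ) ≤ Real.sqrt (‖p.1‖ ^ 2 + s * f p ^ 2) := Real.sqrt_nonneg _
      have habs : ‖Φ p‖ = lam * |f p| * |fderiv ℝ f p (0, 1)| / Real.sqrt (‖p.1‖ ^ 2 + s * f p ^ 2) := by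
        rw [hΦ]
        rw [Real.norm_eq_abs, abs_div, abs_of_nonneg hsqnn, abs_mul, abs_mul, abs_of_pos hlam]
      rw [habs]
      calc lam * |f p| * |fderiv ℝ f p (0, 1)| / Real.sqrt (‖p.1‖ ^ 2 + s * f p ^ 2)
          = (lam * |fderiv ℝ f p (0, 1)|) * (|f p| / Real.sqrt (‖p.1‖ ^ 2 + s * f p ^ 2)) := by
            ring
        _ ≤ (lam * L) * (1 / Real.sqrt s) := by
            apply mul_le_mul (mul_le_mul_of_nonneg_left (hfd_bound p) hlam.le) (hratio p)
              (by positivity) (by positivity)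
        _ = B := by rw [hB]; ring
    · rw [indicator_of_notMem hp]
      have h0 : f p = 0 := image_eq_zero_of_notMem_tsupport hp
      simp [hΦ, h0]
  have hbound_int : Integrable ((tsupport f).indicator (fun _ => B)) volume := by
    rw [integrable_indicator_iff (isClosed_tsupport f).measurableSet]
    exact integrableOn_const hfc.isCompact.measure_lt_top.ne
  have hΦint : Integrable Φ volume := Integrable.mono' hbound_int hΦmeas (ae_of_all _ hΦ_le)
  have hSopen : IsOpen S := isOpen_lt (by fun_prop) continuous_snd
  have hSm : MeasurableSet S := hSopen.measurableSet
  have hind_int : Integrable (S.indicator Φ) volume := hΦint.indicator hSm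
  rw [← integral_indicator hSm]
  rw [MeasureTheory.Measure.volume_eq_prod] at hind_int ⊢
  rw [integral_prod _ hind_int]
  -- a.e. slice facts
  have hae_diff : ∀ᵐ x' : EuclideanSpace ℝ (Fin (n - 1)), ∀ᵐ t : ℝ,
      DifferentiableAt ℝ f (x', t) := by
    have h := hf.ae_differentiableAt
      (μ := ((volume : Measure (EuclideanSpace ℝ (Fin (n - 1)))).prod (volume : Measure ℝ)))
    exact Measure.ae_ae_of_ae_prod h
  have hae_int : ∀ᵐ x' : EuclideanSpace ℝ (Fin (n - 1)),
      Integrable (fun t => S.indicator Φ (x', t)) volume := hind_int.prod_right_ae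
  have hne : ∀ᵐ x' : EuclideanSpace ℝ (Fin (n - 1)), x' ≠ 0 := by
    haveI : Nonempty (Fin (n - 1)) := ⟨⟨0, by omega⟩⟩
    rw [ae_iff]
    have : {x : EuclideanSpace ℝ (Fin (n - 1)) | ¬x ≠ 0} = {0} := by
      ext x; simp
    rw [this]
    exact measure_singleton 0
  have key : ∀ᵐ x' : EuclideanSpace ℝ (Fin (n - 1)),
      (∫ t : ℝ, S.indicator Φ (x', t)) =
        -lam * (g x' / (‖x'‖ + Real.sqrt (‖x'‖ ^ 2 + s * g x'))) := by
    filter_upwards [hae_diff, hae_int, hne] with x' hdiff hintx hx0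
    have hx0' : 0 < ‖x'‖ := norm_pos_iff.2 hx0
    set b : ℝ := lam * ‖x'‖ with hb
    have hbpos : 0 < b := by positivity
    have hind : (fun t => S.indicator Φ (x', t)) = (Ioi b).indicator (fun t => Φ (x', t)) := by
      funext t
      by_cases ht : b < t
      · rw [indicator_of_mem (by exact ht : (x', t) ∈ S), indicator_of_mem (mem_Ioi.2 ht)]
      · rw [indicator_of_notMem (by exact ht : (x', t) ∉ S),
          indicator_of_notMem (by simpa using ht)]
    rw [hind, integral_indicator measurableSet_Ioi]
    rw [hind] at hintx
    have hIOn : IntegrableOn (fun t => Φ (x', t)) (Ioi b) volume :=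
      (integrable_indicator_iff measurableSet_Ioi).1 hintx
    set w : ℝ → ℝ := fun t => f (x', t) with hw
    have hwlip : LipschitzWith (L * 1) w := hf.comp (LipschitzWith.prodMk_left x')
    have hwd : ∀ᵐ t : ℝ, HasDerivAt w (fderiv ℝ f (x', t) (0, 1)) t := by
      filter_upwards [hdiff] with t ht
      have h1 : HasDerivAt (fun t : ℝ => ((x', t) : EuclideanSpace ℝ (Fin (n - 1)) × ℝ))
          ((0 : EuclideanSpace ℝ (Fin (n - 1))), (1 : ℝ)) t :=
        HasDerivAt.prodMk (hasDerivAt_const t x') (hasDerivAt_id t)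
      exact ht.hasFDerivAt.comp_hasDerivAt t h1
    set T : ℝ := max b C + 1 with hT
    have hbT : b ≤ T := le_trans (le_max_left _ _) (by linarith)
    have hCT : C < T := lt_of_le_of_lt (le_max_right b C) (by linarith)
    have hvan : ∀ t, T ≤ t → w t = 0 := by
      intro t ht
      apply hfzero
      have h2 : t ≤ ‖((x', t) : EuclideanSpace ℝ (Fin (n - 1)) × ℝ)‖ :=
        le_trans (le_abs_self t) (by simpa using norm_snd_le (x', t))
      linarith
    have happ := slice_ftc (aN := ‖x'‖) (d := fun t => fderiv ℝ f (x', t) (0, 1))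
      hlam hs hx0' hwlip hwd hbT hIOn hvan
    rw [show (∫ t in Ioi b, Φ (x', t)) =
        ∫ t in Ioi b, lam * w t * fderiv ℝ f (x', t) (0, 1) / Real.sqrt (‖x'‖ ^ 2 + s * w t ^ 2)
        from rfl, happ]
    have hgx : g x' = w b ^ 2 := hg x'
    have hgnn : 0 ≤ g x' := by rw [hgx]; positivity
    rw [← hgx]
    have hApos : 0 < ‖x'‖ ^ 2 + s * g x' := by positivity
    have hsq := Real.sq_sqrt hApos.le
    have hD : 0 < ‖x'‖ + Real.sqrt (‖x'‖ ^ 2 + s * g x') := by positivity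
    field_simp
    nlinarith [hsq, Real.sqrt_nonneg (‖x'‖ ^ 2 + s * g x')]
  rw [integral_congr_ae key, integral_const_mul]
end
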